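/- arXiv:2201.07637 — 7 statements merged into one kernel-verified Lean document; each statement's English description precedes it below -/
import Mathlib

section
/- An ordered tree G is a monotone caterpillar graph if and only if G does not contain any ordered tree on four vertices that is not a monotone caterpillar graph as an ordered subgraph. -/
/-- `G` (an ordered graph on `[m]`, modeled on `Fin m`) is an ordered subgraph of `H`
(on `Fin N`): there is a strictly increasing map preserving edges. -/
def OrderedSubgraph {m N : ℕ} (G : SimpleGraph (Fin m)) (H : SimpleGraph (Fin N)) : Prop :=
  ∃ φ : Fin m → Fin N, StrictMono φ ∧ ∀ i j : Fin m, G.Adj i j → H.Adj (φ i) (φ j)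

/-- The ordered Ramsey number `r_<(G, H)`: the least `N` such that every red-blue coloring
of the edges of the complete ordered graph on `N` vertices (given by its red graph `R`)
contains a red ordered copy of `G` or a blue ordered copy of `H`. -/
noncomputable def orderedRamsey {m k : ℕ} (G : SimpleGraph (Fin m)) (H : SimpleGraph (Fin k)) : ℕ :=
  sInf {N : ℕ | ∀ R : SimpleGraph (Fin N), OrderedSubgraph G R ∨ OrderedSubgraph H Rᶜ}

/-- The nested matching `NM_n`: the ordered graph on `2n` vertices with edges
`{i, 2n - i + 1}` (1-indexed), i.e. `i + j = 2n - 1` in 0-indexed form. -/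
def nestedMatching (n : ℕ) : SimpleGraph (Fin (2 * n)) :=
  SimpleGraph.fromRel (fun i j => (i : ℕ) + (j : ℕ) = 2 * n - 1)

/-- The ordered star `S_{l,r}` on `l + r - 1` vertices: the `l`-th vertex (1-indexed)
is adjacent to all other vertices. -/
def orderedStar (l r : ℕ) : SimpleGraph (Fin (l + r - 1)) :=
  SimpleGraph.fromRel (fun i _ => (i : ℕ) = l - 1)

/-- The join `G + H` of ordered graphs, identifying the rightmost vertex of `G`
with the leftmost vertex of `H`. -/
def orderedJoin {m k : ℕ} (G : SimpleGraph (Fin m)) (H : SimpleGraph (Fin k)) :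
    SimpleGraph (Fin (m + k - 1)) :=
  SimpleGraph.fromRel (fun i j =>
    (∃ a b : Fin m, G.Adj a b ∧ (i : ℕ) = (a : ℕ) ∧ (j : ℕ) = (b : ℕ)) ∨
    (∃ a b : Fin k, H.Adj a b ∧ (i : ℕ) = (a : ℕ) + (m - 1) ∧ (j : ℕ) = (b : ℕ) + (m - 1)))

/-- A connected ordered graph on `m` vertices is `n`-good if
`r_<(G, K_n) = (m-1)(n-1) + 1`. -/
def IsNGood {m : ℕ} (n : ℕ) (G : SimpleGraph (Fin m)) : Prop :=
  G.Connected ∧ orderedRamsey G (⊤ : SimpleGraph (Fin n)) = (m - 1) * (n - 1) + 1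

/-- Monotone caterpillar graphs: joins `S_{l₁,r₁} + ⋯ + S_{l_k,r_k}` of one-sided
ordered stars. -/
inductive IsMonotoneCaterpillar : ∀ {m : ℕ}, SimpleGraph (Fin m) → Prop
  | star {l r : ℕ} (hl : 1 ≤ l) (hr : 1 ≤ r) (h : l = 1 ∨ r = 1) :
      IsMonotoneCaterpillar (orderedStar l r)
  | join {m l r : ℕ} {G : SimpleGraph (Fin m)} (hl : 1 ≤ l) (hr : 1 ≤ r) (h : l = 1 ∨ r = 1)
      (hG : IsMonotoneCaterpillar G) : IsMonotoneCaterpillar (orderedJoin G (orderedStar l r))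

/-- A route in the `N × N` grid: a sequence of positions going only right or down. -/
def IsRoute {N : ℕ} (s : List (Fin N × Fin N)) : Prop :=
  s.Chain' (fun p q =>
    ((q.1 : ℕ) = (p.1 : ℕ) + 1 ∧ q.2 = p.2) ∨ (q.1 = p.1 ∧ (q.2 : ℕ) = (p.2 : ℕ) + 1))


/-!
A connected ordered graph is a monotone caterpillar iff it is obstruction-free: no two disjoint
edges cross or nest, and there is no switch. Stars are obstruction-free and joins preserve this.
Conversely, the leftmost neighbour `p` of the last vertex cuts off a one-sided star on the vertices
from `p` on, and induction handles the rest.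

In a tree avoiding the bad four-vertex trees, a switch spans a path on four vertices (a triangle is
excluded by acyclicity). Two overlapping edges joined by a walk of length at least two give a pair
joined by a shorter walk: the walk must pass over a point of the span of the first edge, and the
edge doing so overlaps it. Eventually the pair is joined by one edge, and the three edges form a
bad four-vertex path.
-/

open SimpleGraph

section Obstructions

variable {n k : ℕ}

/-- The edges `pq` and `rs` cross or are nested. -/
def EdgesOverlap (G : SimpleGraph (Fin n)) (p q r s : Fin n) : Prop :=
  G.Adj p q ∧ G.Adj r s ∧ p ≠ r ∧ p ≠ s ∧ q ≠ r ∧ q ≠ s ∧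
    min p q ≤ max r s ∧ min r s ≤ max p q

/-- An edge `ad` with edges `ab` and `cd` pointing into it; `b = c` (a triangle) is allowed. -/
def IsSwitch (G : SimpleGraph (Fin n)) (a b c d : Fin n) : Prop :=
  G.Adj a b ∧ G.Adj a d ∧ G.Adj c d ∧ a < b ∧ b < d ∧ a < c ∧ c < d

def IsObstructionFree (G : SimpleGraph (Fin n)) : Prop :=
  (∀ p q r s, ¬ EdgesOverlap G p q r s) ∧ ∀ a b c d, ¬ IsSwitch G a b c d

variable {G H : SimpleGraph (Fin n)} {p q r s : Fin n}

lemma EdgesOverlap.swap_left (h : EdgesOverlap G p q r s) : EdgesOverlap G q p r s := by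
  obtain ⟨hpq, hrs, h₁, h₂, h₃, h₄, h₅, h₆⟩ := h
  exact ⟨hpq.symm, hrs, h₃, h₄, h₁, h₂, by rwa [min_comm], by rwa [max_comm]⟩

lemma EdgesOverlap.swap_right (h : EdgesOverlap G p q r s) : EdgesOverlap G p q s r := by
  obtain ⟨hpq, hrs, h₁, h₂, h₃, h₄, h₅, h₆⟩ := h
  exact ⟨hpq, hrs.symm, h₂, h₁, h₄, h₃, by rwa [max_comm], by rwa [min_comm]⟩

lemma EdgesOverlap.mono (hGH : G ≤ H) (h : EdgesOverlap G p q r s) : EdgesOverlap H p q r s :=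
  ⟨hGH h.1, hGH h.2.1, h.2.2⟩

lemma IsSwitch.mono (hGH : G ≤ H) {a b c d : Fin n} (h : IsSwitch G a b c d) :
    IsSwitch H a b c d :=
  ⟨hGH h.1, hGH h.2.1, hGH h.2.2.1, h.2.2.2⟩

lemma edgesOverlap_comap {f : Fin k → Fin n} (hf : StrictMono f) {p q r s : Fin k} :
    EdgesOverlap (G.comap f) p q r s ↔ EdgesOverlap G (f p) (f q) (f r) (f s) := by
  simp only [EdgesOverlap, comap_adj, hf.injective.ne_iff, ← hf.monotone.map_min,
    ← hf.monotone.map_max, hf.le_iff_le]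

lemma isSwitch_comap {f : Fin k → Fin n} (hf : StrictMono f) {a b c d : Fin k} :
    IsSwitch (G.comap f) a b c d ↔ IsSwitch G (f a) (f b) (f c) (f d) := by
  simp only [IsSwitch, comap_adj, hf.lt_iff_lt]

lemma IsObstructionFree.anti (hGH : G ≤ H) (hH : IsObstructionFree H) : IsObstructionFree G :=
  ⟨fun _ _ _ _ h => hH.1 _ _ _ _ (h.mono hGH), fun _ _ _ _ h => hH.2 _ _ _ _ (h.mono hGH)⟩

lemma IsObstructionFree.comap (hG : IsObstructionFree G) {f : Fin k → Fin n} (hf : StrictMono f) :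
    IsObstructionFree (G.comap f) :=
  ⟨fun _ _ _ _ h => hG.1 _ _ _ _ ((edgesOverlap_comap hf).1 h),
    fun _ _ _ _ h => hG.2 _ _ _ _ ((isSwitch_comap hf).1 h)⟩

lemma IsObstructionFree.of_orderedSubgraph {T : SimpleGraph (Fin k)} (hG : IsObstructionFree G)
    (hT : OrderedSubgraph T G) : IsObstructionFree T := by
  obtain ⟨φ, hφ, hadj⟩ := hT
  exact (hG.comap hφ).anti fun i j h => hadj i j h

end Obstructions

section Caterpillars

lemma orderedStar_adj {l r : ℕ} {i j : Fin (l + r - 1)} :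
    (orderedStar l r).Adj i j ↔ i ≠ j ∧ ((i : ℕ) = l - 1 ∨ (j : ℕ) = l - 1) :=
  fromRel_adj _ i j

lemma orderedJoin_adj {m k : ℕ} {G : SimpleGraph (Fin m)} {H : SimpleGraph (Fin k)}
    {i j : Fin (m + k - 1)} :
    (orderedJoin G H).Adj i j ↔
      (∃ a b : Fin m, G.Adj a b ∧ (i : ℕ) = a ∧ (j : ℕ) = b) ∨
      (∃ a b : Fin k, H.Adj a b ∧ (i : ℕ) = a + (m - 1) ∧ (j : ℕ) = b + (m - 1)) := by
  rw [orderedJoin, fromRel_adj]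
  constructor
  · rintro ⟨-, h | ⟨a, b, hab, hi, hj⟩ | ⟨a, b, hab, hi, hj⟩⟩
    · exact h
    · exact .inl ⟨b, a, hab.symm, hj, hi⟩
    · exact .inr ⟨b, a, hab.symm, hj, hi⟩
  · rintro (⟨a, b, hab, hi, hj⟩ | ⟨a, b, hab, hi, hj⟩)
    · exact ⟨fun h => hab.ne (Fin.ext (by rw [← hi, ← hj, h])), .inl (.inl ⟨a, b, hab, hi, hj⟩)⟩
    · refine ⟨fun h => hab.ne (Fin.ext ?_), .inl (.inr ⟨a, b, hab, hi, hj⟩)⟩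
      have := congrArg Fin.val h
      omega

lemma orderedStar_isObstructionFree (l r : ℕ) : IsObstructionFree (orderedStar l r) := by
  constructor
  · rintro u v x y ⟨huv, hxy, h₁, h₂, h₃, h₄, -⟩
    rw [orderedStar_adj] at huv hxy
    omega
  · rintro a b c d ⟨hab, had, hcd, h₁, h₂, h₃, h₄⟩
    rw [orderedStar_adj] at hab had hcd
    omega

lemma IsObstructionFree.orderedJoin {m k : ℕ} {G : SimpleGraph (Fin m)} {H : SimpleGraph (Fin k)}
    (hG : IsObstructionFree G) (hH : IsObstructionFree H) :
    IsObstructionFree (orderedJoin G H) := by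
  -- every edge lies on one side of the glued vertex, and so does every obstruction
  constructor
  · rintro p q r s ⟨hpq, hrs, hov⟩
    simp only [Fin.le_def, Fin.coe_min, Fin.coe_max] at hov
    rcases orderedJoin_adj.1 hpq with ⟨a, b, hab, hp, hq⟩ | ⟨a, b, hab, hp, hq⟩ <;>
      rcases orderedJoin_adj.1 hrs with ⟨c, d, hcd, hr, hs⟩ | ⟨c, d, hcd, hr, hs⟩
    · exact hG.1 a b c d ⟨hab, hcd, by simp only [Fin.le_def, Fin.coe_min, Fin.coe_max]; omega⟩
    · omega
    · omega
    · exact hH.1 a b c d ⟨hab, hcd, by simp only [Fin.le_def, Fin.coe_min, Fin.coe_max]; omega⟩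
  · rintro a b c d ⟨hab, had, hcd, h₁, h₂, h₃, h₄⟩
    rcases orderedJoin_adj.1 had with ⟨a', d', had', ha, hd⟩ | ⟨a', d', had', ha, hd⟩
    · obtain ⟨a₁, b', hab', ha₁, hb⟩ | ⟨_, _, -, _, _⟩ := orderedJoin_adj.1 hab
      · obtain ⟨c', d₁, hcd', hc, hd₁⟩ | ⟨_, _, -, _, _⟩ := orderedJoin_adj.1 hcd
        · obtain rfl : a₁ = a' := Fin.ext (by omega)
          obtain rfl : d₁ = d' := Fin.ext (by omega)
          exact hG.2 a₁ b' c' d₁ ⟨hab', had', hcd', by omega, by omega, by omega, by omega⟩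
        · omega
      · omega
    · obtain ⟨_, _, -, _, _⟩ | ⟨a₁, b', hab', ha₁, hb⟩ := orderedJoin_adj.1 hab
      · omega
      · obtain ⟨_, _, -, _, _⟩ | ⟨c', d₁, hcd', hc, hd₁⟩ := orderedJoin_adj.1 hcd
        · omega
        · obtain rfl : a₁ = a' := Fin.ext (by omega)
          obtain rfl : d₁ = d' := Fin.ext (by omega)
          exact hH.2 a₁ b' c' d₁ ⟨hab', had', hcd', by omega, by omega, by omega, by omega⟩

theorem IsMonotoneCaterpillar.isObstructionFree {m : ℕ} {G : SimpleGraph (Fin m)}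
    (h : IsMonotoneCaterpillar G) : IsObstructionFree G := by
  induction h with
  | star => exact orderedStar_isObstructionFree _ _
  | join _ _ _ _ ih => exact ih.orderedJoin (orderedStar_isObstructionFree _ _)

lemma IsMonotoneCaterpillar.comap_cast {m N : ℕ} {J : SimpleGraph (Fin N)}
    (hJ : IsMonotoneCaterpillar J) (h : m = N) : IsMonotoneCaterpillar (J.comap (Fin.cast h)) := by
  subst h
  simpa using hJ

end Caterpillars

section Structure

lemma SimpleGraph.ext_of_lt {α : Type*} [LinearOrder α] {G H : SimpleGraph α}
    (h : ∀ i j, i < j → (G.Adj i j ↔ H.Adj i j)) : G = H := by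
  ext i j
  rcases lt_trichotomy i j with hij | rfl | hij
  · exact h i j hij
  · simp
  · rw [G.adj_comm, H.adj_comm]
    exact h j i hij

variable {m : ℕ} {G : SimpleGraph (Fin m)}

lemma connected_comap_castLE (hG : G.Connected) {k : ℕ} (hk : 0 < k) (hkm : k ≤ m)
    (hcut : ∀ i j : Fin m, G.Adj i j → (i : ℕ) < k → k ≤ (j : ℕ) → (i : ℕ) + 1 = k) :
    (G.comap (Fin.castLE hkm)).Connected := by
  let proj : Fin m → Fin k := fun x => ⟨min x (k - 1), by omega⟩
  have hstep : ∀ x y, G.Adj x y → (G.comap (Fin.castLE hkm)).Reachable (proj x) (proj y) := by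
    intro x y hxy
    by_cases hx : (x : ℕ) < k <;> by_cases hy : (y : ℕ) < k
    · refine Adj.reachable (comap_adj.2 ?_)
      convert hxy using 1 <;> ext <;> simp [proj] <;> omega
    · have := hcut x y hxy hx (by omega)
      rw [show proj x = proj y from Fin.ext (by simp [proj]; omega)]
    · have := hcut y x hxy.symm hy (by omega)
      rw [show proj x = proj y from Fin.ext (by simp [proj]; omega)]
    · rw [show proj x = proj y from Fin.ext (by simp [proj]; omega)]
  have hwalk : ∀ x y (w : G.Walk x y), (G.comap (Fin.castLE hkm)).Reachable (proj x) (proj y) := by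
    intro x y w
    induction w with
    | nil => rfl
    | cons h _ ih => exact (hstep _ _ h).trans ih
  have hproj : ∀ u : Fin k, proj (Fin.castLE hkm u) = u := fun u => Fin.ext (by simp [proj]; omega)
  have : Nonempty (Fin k) := ⟨⟨0, hk⟩⟩
  refine connected_iff _ |>.2 ⟨fun u v => ?_, inferInstance⟩
  simpa [hproj] using hwalk _ _ (hG.preconnected (Fin.castLE hkm u) (Fin.castLE hkm v)).some

lemma IsObstructionFree.eq_or_eq_of_adj (hfree : IsObstructionFree G) {p ℓ z y : Fin m}
    (hpℓ : G.Adj p ℓ) (hpz : p < z) (hzℓ : z < ℓ) (hzy : G.Adj z y) : y = p ∨ y = ℓ := by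
  by_contra! hy
  refine hfree.1 z y p ℓ ⟨hzy, hpℓ, ?_⟩
  simp only [Fin.le_def, Fin.coe_min, Fin.coe_max]
  omega

lemma adj_iff_of_adj_last_of_lt (hfree : IsObstructionFree G) (hnbr : ∀ v, ∃ u, G.Adj v u)
    {ℓ p q : Fin m} (hle : ∀ z, z ≤ ℓ) (hp : G.Adj ℓ p) (hpmin : ∀ y, G.Adj ℓ y → p ≤ y)
    (hq : G.Adj ℓ q) (hpq : p < q) {i j : Fin m} (hij : i < j) (hpj : p < j) :
    G.Adj i j ↔ p ≤ i ∧ j = ℓ := by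
  have hnp : ∀ z, p < z → z < ℓ → ¬ G.Adj p z := fun z hpz hzℓ hpz' =>
    hfree.2 p z q ℓ ⟨hpz', hp.symm, hq.symm, hpz, hzℓ, hpq, lt_of_le_of_ne (hle q) hq.ne.symm⟩
  constructor
  · intro hadj
    rcases eq_or_lt_of_le (hle j) with rfl | hjℓ
    · exact ⟨hpmin i hadj.symm, rfl⟩
    · rcases hfree.eq_or_eq_of_adj hp.symm hpj hjℓ hadj.symm with rfl | rfl
      · exact absurd hadj (hnp j hpj hjℓ)
      · exact absurd hij (hle j).not_gt
  · rintro ⟨hpi, rfl⟩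
    rcases eq_or_lt_of_le hpi with rfl | hpi'
    · exact hp.symm
    · obtain ⟨y, hy⟩ := hnbr i
      rcases hfree.eq_or_eq_of_adj hp.symm hpi' hij hy with rfl | rfl
      · exact absurd hy.symm (hnp i hpi' hij)
      · exact hy

lemma adj_iff_of_unique_adj_last (hfree : IsObstructionFree G) (hnbr : ∀ v, ∃ u, G.Adj v u)
    {ℓ p : Fin m} (hle : ∀ z, z ≤ ℓ) (hp : G.Adj ℓ p) (huniq : ∀ y, G.Adj ℓ y → y = p)
    {i j : Fin m} (hij : i < j) (hpj : p < j) :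
    G.Adj i j ↔ i = p := by
  constructor
  · intro hadj
    rcases eq_or_lt_of_le (hle j) with rfl | hjℓ
    · exact huniq i hadj.symm
    · rcases hfree.eq_or_eq_of_adj hp.symm hpj hjℓ hadj.symm with h | rfl
      · exact h
      · exact absurd hij (hle j).not_gt
  · rintro rfl
    rcases eq_or_lt_of_le (hle j) with rfl | hjℓ
    · exact hp.symm
    · obtain ⟨y, hy⟩ := hnbr j
      rcases hfree.eq_or_eq_of_adj hp.symm hpj hjℓ hy with rfl | rfl
      · exact hy.symm
      · exact absurd (huniq j hy.symm) hpj.ne'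

lemma exists_star_suffix (hG : G.Connected) (hfree : IsObstructionFree G) (hm : 2 ≤ m) :
    ∃ P c : ℕ, P + 1 < m ∧ (c = P ∨ c = m - 1) ∧ ∀ i j : Fin m, i < j → P < (j : ℕ) →
      (G.Adj i j ↔ P ≤ (i : ℕ) ∧ ((i : ℕ) = c ∨ (j : ℕ) = c)) := by
  have : Nontrivial (Fin m) := Fin.nontrivial_iff_two_le.2 hm
  have hnbr := hG.preconnected.exists_adj_of_nontrivial
  obtain ⟨ℓ, hℓ⟩ : ∃ ℓ : Fin m, (ℓ : ℕ) = m - 1 := ⟨⟨m - 1, by omega⟩, rfl⟩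
  have hle : ∀ z : Fin m, z ≤ ℓ := fun z => Fin.le_def.2 (by omega)
  obtain ⟨p, hp, hpmin⟩ := wellFounded_lt.has_min {y | G.Adj ℓ y} (hnbr ℓ)
  replace hpmin : ∀ y, G.Adj ℓ y → p ≤ y := fun y hy => not_lt.1 (hpmin y hy)
  have hpℓ : p < ℓ := lt_of_le_of_ne (hle p) hp.ne.symm
  by_cases hdeg : ∃ q, G.Adj ℓ q ∧ q ≠ p
  · obtain ⟨q, hq, hqp⟩ := hdeg
    refine ⟨p, m - 1, by omega, .inr rfl, fun i j hij hpj => ?_⟩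
    rw [adj_iff_of_adj_last_of_lt hfree hnbr hle hp hpmin hq
      (lt_of_le_of_ne (hpmin q hq) hqp.symm) hij hpj, Fin.le_def, Fin.ext_iff, hℓ]
    omega
  · push Not at hdeg
    refine ⟨p, p, by omega, .inl rfl, fun i j hij hpj => ?_⟩
    rw [adj_iff_of_unique_adj_last hfree hnbr hle hp hdeg hij hpj, Fin.ext_iff]
    omega

lemma orderedJoin_orderedStar_adj {k l r : ℕ} {H : SimpleGraph (Fin k)} (hk : 1 ≤ k) (hl : 1 ≤ l)
    {i j : Fin (k + (l + r - 1) - 1)} (hij : i < j) :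
    (orderedJoin H (orderedStar l r)).Adj i j ↔
      (∃ a b : Fin k, H.Adj a b ∧ (i : ℕ) = a ∧ (j : ℕ) = b) ∨
      (k - 1 ≤ (i : ℕ) ∧ ((i : ℕ) = k + l - 2 ∨ (j : ℕ) = k + l - 2)) := by
  rw [orderedJoin_adj]
  refine or_congr Iff.rfl ⟨?_, fun h => ?_⟩
  · rintro ⟨a, b, hab, hi, hj⟩
    rw [orderedStar_adj] at hab
    omega
  · refine ⟨⟨i - (k - 1), by omega⟩, ⟨j - (k - 1), by omega⟩, orderedStar_adj.2 ⟨?_, ?_⟩, ?_, ?_⟩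
    · exact Fin.ne_of_val_ne (by simp only; omega)
    all_goals simp only; omega

lemma isMonotoneCaterpillar_of_star_suffix {P l r c : ℕ} (hl : 1 ≤ l) (hr : 1 ≤ r)
    (hlr : l = 1 ∨ r = 1) (hc : P + l = c + 1) (hPm : P + 1 ≤ m) (hsize : P + (l + r - 1) = m)
    (hpre : IsMonotoneCaterpillar (G.comap (Fin.castLE hPm)))
    (hsuf : ∀ i j : Fin m, i < j → P < (j : ℕ) →
      (G.Adj i j ↔ P ≤ (i : ℕ) ∧ ((i : ℕ) = c ∨ (j : ℕ) = c))) :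
    IsMonotoneCaterpillar G := by
  have hm : m = P + 1 + (l + r - 1) - 1 := by omega
  convert (IsMonotoneCaterpillar.join hl hr hlr hpre).comap_cast hm using 1
  refine ext_of_lt fun i j hij => ?_
  rw [comap_adj, orderedJoin_orderedStar_adj (by omega) hl (by simpa using hij)]
  simp only [Fin.val_cast, comap_adj]
  by_cases hj : P < (j : ℕ)
  · rw [hsuf i j hij hj]
    constructor
    · rintro ⟨hpi, hc'⟩
      exact .inr ⟨by omega, by omega⟩
    · rintro (⟨a, b, -, -, hb⟩ | ⟨hpi, hc'⟩)
      · omega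
      · exact ⟨by omega, by omega⟩
  · constructor
    · intro hadj
      refine .inl ⟨⟨i, by omega⟩, ⟨j, by omega⟩, ?_, rfl, rfl⟩
      convert hadj using 1 <;> ext <;> rfl
    · rintro (⟨a, b, hab, hi, hj'⟩ | ⟨hpi, -⟩)
      · convert hab using 1 <;> ext <;> simp [hi, hj']
      · omega

theorem isMonotoneCaterpillar_of_isObstructionFree (hG : G.Connected)
    (hfree : IsObstructionFree G) : IsMonotoneCaterpillar G := by
  induction m using Nat.strong_induction_on with
  | _ m ih =>
  rcases lt_or_ge m 2 with hm | hm
  · obtain rfl : m = 1 := by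
      obtain ⟨v⟩ := hG.nonempty
      have := v.isLt
      omega
    have hbot : G = orderedStar 1 1 := by
      ext i j
      simp [Subsingleton.elim i j]
    rw [hbot]
    exact .star le_rfl le_rfl (.inl rfl)
  obtain ⟨P, c, hPm, hc, hsuf⟩ := exists_star_suffix hG hfree hm
  have hpre : IsMonotoneCaterpillar (G.comap (Fin.castLE hPm.le)) := by
    refine ih (P + 1) (by omega) (connected_comap_castLE hG (by omega) hPm.le ?_)
      (hfree.comap (Fin.strictMono_castLE _))
    intro i j hij hi hj
    have := ((hsuf i j (by omega) (by omega)).1 hij).1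
    omega
  rcases hc with rfl | rfl
  · exact isMonotoneCaterpillar_of_star_suffix (l := 1) (r := m - c) le_rfl (by omega) (.inl rfl)
      rfl hPm.le (by omega) hpre hsuf
  · exact isMonotoneCaterpillar_of_star_suffix (l := m - P) (r := 1) (by omega) le_rfl (.inr rfl)
      (by omega) hPm.le (by omega) hpre hsuf

end Structure

section Forbidden

variable {n : ℕ} {G : SimpleGraph (Fin n)}

lemma not_edgesOverlap_of_walk (hbridge : ∀ p q r s, EdgesOverlap G p q r s → ¬ G.Adj q r)
    {p q r s : Fin n} (W : G.Walk q r) : ¬ EdgesOverlap G p q r s := by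
  induction hW : W.length using Nat.strong_induction_on generalizing p q r s with
  | _ N ih =>
  intro hov
  have ih' : ∀ {p' q' r' s'} (V : G.Walk q' r'), V.length < N → ¬ EdgesOverlap G p' q' r' s' :=
    fun V hV => ih _ hV V rfl
  cases W with
  | nil => exact hov.2.2.2.2.1 rfl
  | @cons _ x _ hqx W' =>
  rw [Walk.length_cons] at hW
  have hE : ∀ y ∈ W'.support, y ≠ p ∧ y ≠ q := fun y hy => by
    have := W'.length_dropUntil_le_length hy
    constructor <;> rintro rfl
    · exact ih' (W'.dropUntil _ hy) (by omega) hov.swap_left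
    · exact ih' (W'.dropUntil _ hy) (by omega) hov
  have hxr : x ≠ r := fun h => hbridge p q r s hov (h ▸ hqx)
  have hxs : x ≠ s := fun h => hbridge p q s r hov.swap_right (h ▸ hqx)
  have hmeet : ¬ (min q x ≤ max r s ∧ min r s ≤ max q x) := fun h =>
    ih' W' (by omega) ⟨hqx, hov.2.1, hov.2.2.2.2.1, hov.2.2.2.2.2.1, hxr, hxs, h⟩
  -- `W'` has to pass over `max x q` (or `min x q`), a point of the span of `pq`; the edge doing so
  -- overlaps `pq` and is closer to `q` than `r` is
  obtain ⟨S, hxS, hrS, hS⟩ : ∃ S : Set (Fin n), x ∈ S ∧ r ∉ S ∧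
      ∀ y z, y ∈ S → z ∉ S → min p q ≤ max y z ∧ min y z ≤ max p q := by
    have hxp := (hE x W'.start_mem_support).1
    obtain ⟨-, -, -, -, -, -, h₁, h₂⟩ := hov
    simp only [Fin.le_def, Fin.coe_min, Fin.coe_max, not_and_or, not_le] at h₁ h₂ hmeet ⊢
    rcases lt_or_gt_of_ne hxr with hlt | hgt
    · refine ⟨Set.Iic (max x q), Set.mem_Iic.2 (le_max_left _ _), ?_, fun y z hy hz => ?_⟩ <;>
        simp only [Set.mem_Iic, not_le, Fin.lt_def, Fin.le_def, Fin.coe_max] at * <;> omega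
    · refine ⟨Set.Ici (min x q), Set.mem_Ici.2 (min_le_left _ _), ?_, fun y z hy hz => ?_⟩ <;>
        simp only [Set.mem_Ici, not_le, Fin.lt_def, Fin.le_def, Fin.coe_min] at * <;> omega
  obtain ⟨d, hd, hdS, hdS'⟩ := W'.exists_boundary_dart S hxS hrS
  have hy := W'.dart_fst_mem_support_of_mem_darts hd
  have hz := W'.dart_snd_mem_support_of_mem_darts hd
  have hlen := W'.length_takeUntil_lt_length hy fun h => hrS (h ▸ hdS)
  refine ih' (.cons hqx (W'.takeUntil _ hy)) (by rw [Walk.length_cons]; omega)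
    ⟨hov.1, d.adj, (hE _ hy).1.symm, (hE _ hz).1.symm, (hE _ hy).2.symm, (hE _ hz).2.symm,
      hS _ _ hdS hdS'⟩

lemma SimpleGraph.connected_of_path_cover {V : Type*} {T : SimpleGraph V} {i₀ i₁ i₂ i₃ : V}
    (h₀₁ : T.Adj i₀ i₁) (h₁₂ : T.Adj i₁ i₂) (h₂₃ : T.Adj i₂ i₃)
    (hcover : ∀ j, j = i₀ ∨ j = i₁ ∨ j = i₂ ∨ j = i₃) : T.Connected := by
  have hreach : ∀ j, T.Reachable i₀ j := by
    have r₂ := h₀₁.reachable.trans h₁₂.reachable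
    intro j
    rcases hcover j with rfl | rfl | rfl | rfl
    · rfl
    · exact h₀₁.reachable
    · exact r₂
    · exact r₂.trans h₂₃.reachable
  exact (connected_iff _).2 ⟨fun u v => (hreach u).symm.trans (hreach v), ⟨i₀⟩⟩

/-- The subtree is `G` pulled back along the increasing enumeration of `{x₀, x₁, x₂, x₃}`. -/
lemma exists_bad_subtree_of_path (hG : G.IsAcyclic) {x₀ x₁ x₂ x₃ : Fin n}
    (h₀₁ : G.Adj x₀ x₁) (h₁₂ : G.Adj x₁ x₂) (h₂₃ : G.Adj x₂ x₃)
    (hobs : EdgesOverlap G x₀ x₁ x₂ x₃ ∨ IsSwitch G x₁ x₀ x₃ x₂) :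
    ∃ T : SimpleGraph (Fin 4), T.Connected ∧ T.IsAcyclic ∧ ¬ IsMonotoneCaterpillar T ∧
      OrderedSubgraph T G := by
  have h₀₃ : x₀ ≠ x₃ := by
    rintro rfl
    exact hG.cliqueFree le_rfl {x₀, x₁, x₂} (is3Clique_triple_iff.2 ⟨h₀₁, h₂₃.symm, h₁₂⟩)
  have h₀₂ : x₀ ≠ x₂ ∧ x₁ ≠ x₃ := by
    rcases hobs with ⟨-, -, h, -, -, h', -⟩ | ⟨-, -, -, -, h, h', -⟩
    · exact ⟨h, h'⟩
    · exact ⟨h.ne, h'.ne⟩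
  set s := [x₀, x₁, x₂, x₃].toFinset
  have hs : s.card = 4 := List.toFinset_card_of_nodup (by
    simp [h₀₁.ne, h₁₂.ne, h₂₃.ne, h₀₂.1, h₀₂.2, h₀₃])
  have hmem : ∀ x, x ∈ s ↔ x = x₀ ∨ x = x₁ ∨ x = x₂ ∨ x = x₃ := by simp [s]
  set f := s.orderEmbOfFin hs
  have hpre : ∀ x ∈ s, ∃ i, f i = x := fun x hx => by
    rwa [← Set.mem_range, Finset.range_orderEmbOfFin]
  obtain ⟨i₀, hi₀⟩ := hpre x₀ ((hmem _).2 (by simp))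
  obtain ⟨i₁, hi₁⟩ := hpre x₁ ((hmem _).2 (by simp))
  obtain ⟨i₂, hi₂⟩ := hpre x₂ ((hmem _).2 (by simp))
  obtain ⟨i₃, hi₃⟩ := hpre x₃ ((hmem _).2 (by simp))
  have hcover : ∀ j, j = i₀ ∨ j = i₁ ∨ j = i₂ ∨ j = i₃ := fun j => by
    have hj : f j = f i₀ ∨ f j = f i₁ ∨ f j = f i₂ ∨ f j = f i₃ := by
      rw [hi₀, hi₁, hi₂, hi₃]
      exact (hmem _).1 (s.orderEmbOfFin_mem hs j)
    simpa only [f.injective.eq_iff] using hj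
  refine ⟨G.comap f, connected_of_path_cover (by simpa [hi₀, hi₁] using h₀₁)
    (by simpa [hi₁, hi₂] using h₁₂) (by simpa [hi₂, hi₃] using h₂₃) hcover,
    hG.comap (Hom.comap f G) f.injective, fun hT => ?_, f, f.strictMono, fun _ _ h => h⟩
  · rcases hobs with hov | hsw
    · exact hT.isObstructionFree.1 i₀ i₁ i₂ i₃
        ((edgesOverlap_comap f.strictMono).2 (by rwa [hi₀, hi₁, hi₂, hi₃]))
    · exact hT.isObstructionFree.2 i₁ i₀ i₃ i₂
        ((isSwitch_comap f.strictMono).2 (by rwa [hi₀, hi₁, hi₂, hi₃]))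

end Forbidden

/-- An ordered tree `G` is a monotone caterpillar graph iff it does not
contain any ordered tree on four vertices that is not a monotone caterpillar graph as an
ordered subgraph. -/
theorem stmt_13 (m : ℕ) (G : SimpleGraph (Fin m)) (hGconn : G.Connected)
    (hGacyc : G.IsAcyclic) :
    IsMonotoneCaterpillar G ↔
      ∀ T : SimpleGraph (Fin 4), T.Connected → T.IsAcyclic →
        ¬ IsMonotoneCaterpillar T → ¬ OrderedSubgraph T G := by
  refine ⟨fun hG T hT _ hTcat hTG => hTcat ?_, fun hfree => ?_⟩
  · exact isMonotoneCaterpillar_of_isObstructionFree hT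
      (hG.isObstructionFree.of_orderedSubgraph hTG)
  have hpath : ∀ {x₀ x₁ x₂ x₃ : Fin m}, G.Adj x₀ x₁ → G.Adj x₁ x₂ → G.Adj x₂ x₃ →
      ¬ (EdgesOverlap G x₀ x₁ x₂ x₃ ∨ IsSwitch G x₁ x₀ x₃ x₂) := fun h₀₁ h₁₂ h₂₃ hobs => by
    obtain ⟨T, hT, hTacyc, hTcat, hTG⟩ := exists_bad_subtree_of_path hGacyc h₀₁ h₁₂ h₂₃ hobs
    exact hfree T hT hTacyc hTcat hTG
  refine isMonotoneCaterpillar_of_isObstructionFree hGconn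
    ⟨fun p q r s => ?_, fun a b c d hsw => ?_⟩
  · exact not_edgesOverlap_of_walk (fun p q r s hov hqr => hpath hov.1 hqr hov.2.1 (.inl hov))
      (hGconn.preconnected q r).some
  · exact hpath hsw.1.symm hsw.2.1 hsw.2.2.1.symm (.inr hsw)
end

section
/- For every positive integer n and every integer N ≥ 2n, if an ordered graph G on [N] does not contain the nested matching NM_n as an ordered subgraph, then G has at most (n − 1)(2N − 2n + 1) edges. -/
/-!
Edges `a < b` and `a' < b'` (vertices `0, …, N - 1`) with `a + b = a' + b'` are nested, so the
edges of a given sum `s` form a nested matching and there are at most `n - 1` of them. Ranking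
each edge by the number `r` of edges of the same sum enclosing it gives `r ≤ n - 2`, and those
`r` edges have distinct endpoints to the left and to the right, which forces
`2r + 1 ≤ s ≤ 2N - 2r - 3`. Rank and sum determine the edge, so there are at most
`∑_{r < n - 1} (2N - 4r - 3) = (n - 1)(2N - 2n + 1)` edges.
-/

open Finset

theorem orderedSubgraph_nestedMatching_of_nested {n N : ℕ} {G : SimpleGraph (Fin N)}
    (a b : Fin n → Fin N) (ha : StrictMono a) (hb : StrictAnti b) (hab : ∀ i j, a i < b j)
    (hadj : ∀ i, G.Adj (a i) (b i)) : OrderedSubgraph (nestedMatching n) G := by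
  let φ : Fin (2 * n) → Fin N := fun x =>
    if hx : (x : ℕ) < n then a ⟨x, hx⟩ else b ⟨2 * n - 1 - x, by omega⟩
  refine ⟨φ, fun x y hxy => ?_, fun x y hxy => ?_⟩
  · rw [Fin.lt_def] at hxy
    by_cases hx : (x : ℕ) < n <;> by_cases hy : (y : ℕ) < n <;>
      simp only [φ, hx, hy, dite_true, dite_false]
    · exact ha (Fin.mk_lt_mk.2 hxy)
    · exact hab _ _
    · omega
    · exact hb (Fin.mk_lt_mk.2 (by omega))
  · rw [nestedMatching, SimpleGraph.fromRel_adj] at hxy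
    have hne : (x : ℕ) ≠ y := Fin.val_ne_of_ne hxy.1
    have hsum : (x : ℕ) + y = 2 * n - 1 := by omega
    rcases Nat.lt_or_ge (x : ℕ) n with hx | hx
    · have hy : ¬ (y : ℕ) < n := by omega
      simp only [φ, hx, hy, dite_true, dite_false]
      convert hadj ⟨x, hx⟩ using 3
      omega
    · have hy : (y : ℕ) < n := by omega
      have hx : ¬ (x : ℕ) < n := by omega
      simp only [φ, hx, hy, dite_true, dite_false]
      convert (hadj ⟨y, hy⟩).symm using 3
      omega

namespace SimpleGraph

variable {N : ℕ} (G : SimpleGraph (Fin N)) [DecidableRel G.Adj]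

def orientedEdges : Finset (Fin N × Fin N) := {p | p.1 < p.2 ∧ G.Adj p.1 p.2}

def orientedEdgesWithSum (s : ℕ) : Finset (Fin N × Fin N) :=
  {p ∈ G.orientedEdges | (p.1 : ℕ) + p.2 = s}

def sumRank (p : Fin N × Fin N) : ℕ :=
  #{q ∈ G.orientedEdgesWithSum (p.1 + p.2) | q.1 < p.1}

variable {G}

theorem mem_orientedEdges {p : Fin N × Fin N} :
    p ∈ G.orientedEdges ↔ p.1 < p.2 ∧ G.Adj p.1 p.2 := by
  simp [orientedEdges]

theorem mem_orientedEdgesWithSum {s : ℕ} {p : Fin N × Fin N} :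
    p ∈ G.orientedEdgesWithSum s ↔ p.1 < p.2 ∧ G.Adj p.1 p.2 ∧ (p.1 : ℕ) + p.2 = s := by
  simp [orientedEdgesWithSum, mem_orientedEdges, and_assoc]

theorem ncard_edgeSet_eq_card_orientedEdges : G.edgeSet.ncard = #G.orientedEdges := by
  have himage : G.edgeSet = (fun p : Fin N × Fin N => s(p.1, p.2)) '' G.orientedEdges := by
    ext e
    induction e using Sym2.ind with | _ a b
    refine ⟨fun h => ?_, ?_⟩
    · rcases lt_or_gt_of_ne (G.ne_of_adj h) with hab | hba
      · exact ⟨(a, b), mem_orientedEdges.2 ⟨hab, h⟩, rfl⟩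
      · exact ⟨(b, a), mem_orientedEdges.2 ⟨hba, h.symm⟩, Sym2.eq_swap⟩
    · rintro ⟨p, hp, hpe⟩
      rw [← hpe]
      exact (mem_orientedEdges.1 hp).2
  rw [himage, Set.InjOn.ncard_image, Set.ncard_coe_finset]
  intro p hp q hq hpq
  have hp := (mem_orientedEdges.1 hp).1
  have hq := (mem_orientedEdges.1 hq).1
  rcases Sym2.eq_iff.1 hpq with ⟨h₁, h₂⟩ | ⟨h₁, h₂⟩
  · exact Prod.ext h₁ h₂
  · exact absurd (h₁ ▸ h₂ ▸ hp) hq.asymm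

theorem injOn_fst_orientedEdgesWithSum (s : ℕ) :
    Set.InjOn Prod.fst (G.orientedEdgesWithSum s : Set (Fin N × Fin N)) := by
  intro p hp q hq hpq
  have := (mem_orientedEdgesWithSum.1 hp).2.2
  have := (mem_orientedEdgesWithSum.1 hq).2.2
  have := congrArg Fin.val hpq
  exact Prod.ext hpq (Fin.ext (by omega))

theorem injOn_snd_orientedEdgesWithSum (s : ℕ) :
    Set.InjOn Prod.snd (G.orientedEdgesWithSum s : Set (Fin N × Fin N)) := by
  intro p hp q hq hpq
  have := (mem_orientedEdgesWithSum.1 hp).2.2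
  have := (mem_orientedEdgesWithSum.1 hq).2.2
  have := congrArg Fin.val hpq
  exact Prod.ext (Fin.ext (by omega)) hpq

theorem card_orientedEdgesWithSum_lt {n : ℕ} (hG : ¬ OrderedSubgraph (nestedMatching n) G)
    (s : ℕ) : #(G.orientedEdgesWithSum s) < n := by
  by_contra! h
  obtain ⟨T, hTsub, hTcard⟩ := exists_subset_card_eq h
  have hT : ∀ p ∈ T, p.1 < p.2 ∧ G.Adj p.1 p.2 ∧ (p.1 : ℕ) + p.2 = s :=
    fun p hp => mem_orientedEdgesWithSum.1 (hTsub hp)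
  have hL : #(T.image Prod.fst) = n := by
    rw [card_image_of_injOn ((injOn_fst_orientedEdgesWithSum s).mono (coe_subset.2 hTsub)),
      hTcard]
  set a := (T.image Prod.fst).orderEmbOfFin hL
  have ha : ∀ i, ∃ p ∈ T, p.1 = a i := fun i =>
    mem_image.1 ((T.image Prod.fst).orderEmbOfFin_mem hL i)
  choose p hpT hpa using ha
  have hsum : ∀ i, (a i : ℕ) + (p i).2 = s := fun i => hpa i ▸ (hT _ (hpT i)).2.2
  have hlt : ∀ i, a i < (p i).2 := fun i => hpa i ▸ (hT _ (hpT i)).1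
  have hanti : StrictAnti fun i => (p i).2 := fun i j hij => by
    have := Fin.lt_def.1 (a.strictMono hij)
    have := hsum i
    have := hsum j
    show (p j).2 < (p i).2
    exact Fin.lt_def.2 (by omega)
  refine hG (orderedSubgraph_nestedMatching_of_nested a _ a.strictMono hanti (fun i j => ?_)
    (fun i => hpa i ▸ (hT _ (hpT i)).2.1))
  rcases le_or_gt i j with hij | hij
  · exact (a.monotone hij).trans_lt (hlt j)
  · exact (hlt i).trans (hanti hij)

theorem sumRank_lt_card {p : Fin N × Fin N} (hp : p ∈ G.orientedEdges) :
    G.sumRank p < #(G.orientedEdgesWithSum (p.1 + p.2)) := by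
  have hp := mem_orientedEdges.1 hp
  exact card_lt_card (filter_ssubset.2
    ⟨p, mem_orientedEdgesWithSum.2 ⟨hp.1, hp.2, rfl⟩, lt_irrefl _⟩)

theorem sumRank_le_fst (p : Fin N × Fin N) : G.sumRank p ≤ p.1 := calc
  G.sumRank p ≤ #(Iio p.1) := by
    refine card_le_card_of_injOn Prod.fst (fun q hq => ?_)
      ((injOn_fst_orientedEdgesWithSum _).mono (filter_subset _ _))
    exact mem_Iio.2 (mem_filter.1 hq).2
  _ = p.1 := Fin.card_Iio _

theorem sumRank_le_sub_snd (p : Fin N × Fin N) : G.sumRank p ≤ N - 1 - p.2 := calc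
  G.sumRank p ≤ #(Ioi p.2) := by
    refine card_le_card_of_injOn Prod.snd (fun q hq => ?_)
      ((injOn_snd_orientedEdgesWithSum _).mono (filter_subset _ _))
    obtain ⟨hq, hlt⟩ := mem_filter.1 hq
    have := (mem_orientedEdgesWithSum.1 hq).2.2
    exact mem_Ioi.2 (Fin.lt_def.2 (by rw [Fin.lt_def] at hlt; omega))
  _ = N - 1 - p.2 := Fin.card_Ioi _

theorem sumRank_lt_sumRank {p q : Fin N × Fin N} (hq : q ∈ G.orientedEdgesWithSum (p.1 + p.2))
    (h : q.1 < p.1) : G.sumRank q < G.sumRank p := by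
  have hsum := (mem_orientedEdgesWithSum.1 hq).2.2
  rw [sumRank, sumRank, hsum]
  refine card_lt_card ⟨monotone_filter_right _ fun _ _ hr => hr.trans h, fun hsub => ?_⟩
  exact lt_irrefl _ (mem_filter.1 (hsub (mem_filter.2 ⟨hq, h⟩))).2

theorem injOn_sumRank_orientedEdgesWithSum (s : ℕ) :
    Set.InjOn G.sumRank (G.orientedEdgesWithSum s : Set (Fin N × Fin N)) := by
  intro p hp q hq hpq
  have hp' := (mem_orientedEdgesWithSum.1 hp).2.2
  have hq' := (mem_orientedEdgesWithSum.1 hq).2.2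
  refine injOn_fst_orientedEdgesWithSum s hp hq ?_
  rcases lt_trichotomy p.1 q.1 with h | h | h
  · exact absurd hpq (sumRank_lt_sumRank (by rwa [hq']) h).ne
  · exact h
  · exact absurd hpq (sumRank_lt_sumRank (by rwa [hp']) h).ne'

theorem card_filter_sumRank_eq_le (r : ℕ) :
    #{p ∈ G.orientedEdges | G.sumRank p = r} ≤ #(Icc (2 * r + 1) (2 * N - 2 * r - 3)) := by
  refine card_le_card_of_injOn (fun p => (p.1 : ℕ) + p.2) (fun p hp => ?_)
    (fun p hp q hq hpq => ?_)
  · obtain ⟨hpE, rfl⟩ := mem_filter.1 hp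
    have := G.sumRank_le_fst p
    have := G.sumRank_le_sub_snd p
    have := Fin.lt_def.1 (mem_orientedEdges.1 hpE).1
    have := p.2.isLt
    simp only [mem_coe, mem_Icc]
    omega
  · obtain ⟨hpE, hpr⟩ := mem_filter.1 hp
    obtain ⟨hqE, hqr⟩ := mem_filter.1 hq
    have hpE := mem_orientedEdges.1 hpE
    have hqE := mem_orientedEdges.1 hqE
    exact injOn_sumRank_orientedEdgesWithSum _ (mem_orientedEdgesWithSum.2 ⟨hpE.1, hpE.2, rfl⟩)
      (mem_orientedEdgesWithSum.2 ⟨hqE.1, hqE.2, hpq.symm⟩) (hpr.trans hqr.symm)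

end SimpleGraph

theorem sum_range_card_Icc {m N : ℕ} (h : 2 * m ≤ N) :
    ∑ r ∈ range m, #(Icc (2 * r + 1) (2 * N - 2 * r - 3)) = m * (2 * N - 2 * m - 1) := by
  induction m with
  | zero => simp
  | succ m ih =>
    rw [sum_range_succ, ih (by omega), Nat.card_Icc]
    obtain ⟨B, rfl⟩ := Nat.exists_eq_add_of_le h
    rw [show 2 * (2 * (m + 1) + B) - 2 * m - 1 = 2 * m + 2 * B + 3 by omega,
      show 2 * (2 * (m + 1) + B) - 2 * m - 3 + 1 - (2 * m + 1) = 2 * B + 1 by omega,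
      show 2 * (2 * (m + 1) + B) - 2 * (m + 1) - 1 = 2 * m + 2 * B + 1 by omega]
    ring

theorem stmt_14_general (n N : ℕ) (hN : 2 * n ≤ N) (G : SimpleGraph (Fin N))
    (hG : ¬ OrderedSubgraph (nestedMatching n) G) :
    G.edgeSet.ncard ≤ (n - 1) * (2 * N - 2 * n + 1) := by
  classical
  have hrank : ∀ p ∈ G.orientedEdges, G.sumRank p ∈ range (n - 1) := fun p hp =>
    mem_range.2 ((G.sumRank_lt_card hp).trans_le
      (Nat.le_sub_one_of_lt (SimpleGraph.card_orientedEdgesWithSum_lt hG _)))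
  calc G.edgeSet.ncard = #G.orientedEdges :=
      SimpleGraph.ncard_edgeSet_eq_card_orientedEdges
    _ = ∑ r ∈ range (n - 1), #{p ∈ G.orientedEdges | G.sumRank p = r} :=
      card_eq_sum_card_fiberwise hrank
    _ ≤ ∑ r ∈ range (n - 1), #(Icc (2 * r + 1) (2 * N - 2 * r - 3)) :=
      sum_le_sum fun r _ => SimpleGraph.card_filter_sumRank_eq_le r
    _ = (n - 1) * (2 * N - 2 * n + 1) := by
      rw [sum_range_card_Icc (by omega)]
      rcases n with _ | n
      · simp
      · congr 1
        omega

/-- For every positive integer `n` and every `N ≥ 2n`, an ordered graph on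
`[N]` with no ordered-subgraph copy of `NM_n` has at most `(n - 1)(2N - 2n + 1)` edges. -/
theorem stmt_14 (n N : ℕ) (hn : 1 ≤ n) (hN : 2 * n ≤ N) (G : SimpleGraph (Fin N))
    (hG : ¬ OrderedSubgraph (nestedMatching n) G) :
    G.edgeSet.ncard ≤ (n - 1) * (2 * N - 2 * n + 1) :=
  stmt_14_general n N hN G hG
end

section
/- For every positive integer n and every integer N ≥ 2n, the ordered graph H on [N] whose edge set consists of all pairs {i, j} with 1 ≤ |i − j| ≤ 2n − 2 has exactly (n − 1)(2N − 2n + 1) edges and does not contain the nested matching NM_n as an ordered subgraph. Consequently, the upper bound (n − 1)(2N − 2n + 1) on the number of edges of an ordered graph on [N] with no ordered subgraph copy of NM_n is attained. -/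
open Finset

theorem StrictMono.fin_val_sub_le {m N : ℕ} {φ : Fin m → Fin N} (hφ : StrictMono φ)
    {i j : Fin m} (hij : i ≤ j) : (j : ℕ) - i ≤ (φ j : ℕ) - φ i := by
  have hcard : #(Icc i j) ≤ #(Icc (φ i) (φ j)) :=
    card_le_card_of_injOn φ (fun x hx => by
      simp only [coe_Icc, Set.mem_Icc] at hx ⊢
      exact ⟨hφ.monotone hx.1, hφ.monotone hx.2⟩) hφ.injective.injOn
  simp only [Fin.card_Icc] at hcard
  have := hφ.monotone hij
  rw [Fin.le_def] at hij this
  omega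

theorem OrderedSubgraph.exists_adj_sub_le {m N : ℕ} {G : SimpleGraph (Fin m)}
    {H : SimpleGraph (Fin N)} (hGH : OrderedSubgraph G H) {i j : Fin m} (hij : i < j)
    (hadj : G.Adj i j) : ∃ a b : Fin N, a < b ∧ H.Adj a b ∧ (j : ℕ) - i ≤ (b : ℕ) - a := by
  obtain ⟨φ, hφ, hmap⟩ := hGH
  exact ⟨φ i, φ j, hφ hij, hmap i j hadj, hφ.fin_val_sub_le hij.le⟩

theorem SimpleGraph.ncard_edgeSet_fromRel_of_lt {α : Type*} [LinearOrder α] {r : α → α → Prop}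
    (hr : ∀ a b, r a b → a < b) :
    (SimpleGraph.fromRel r).edgeSet.ncard = {p : α × α | r p.1 p.2}.ncard := by
  have hedge :
      (SimpleGraph.fromRel r).edgeSet = (fun p : α × α => s(p.1, p.2)) '' {p | r p.1 p.2} := by
    ext e
    induction e with
    | _ a b =>
      simp only [SimpleGraph.mem_edgeSet, SimpleGraph.fromRel_adj, Set.mem_image,
        Set.mem_ofPred_eq, Sym2.eq_iff]
      constructor
      · rintro ⟨-, h | h⟩
        · exact ⟨(a, b), h, Or.inl ⟨rfl, rfl⟩⟩
        · exact ⟨(b, a), h, Or.inr ⟨rfl, rfl⟩⟩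
      · rintro ⟨⟨c, d⟩, h, ⟨rfl, rfl⟩ | ⟨rfl, rfl⟩⟩
        · exact ⟨(hr _ _ h).ne, Or.inl h⟩
        · exact ⟨(hr _ _ h).ne', Or.inr h⟩
  rw [hedge]
  refine Set.InjOn.ncard_image fun p hp q hq hpq => ?_
  rcases Sym2.mk_eq_mk_iff.mp hpq with h | h
  · exact h
  · subst h
    exact ((lt_irrefl _) ((hr _ _ hp).trans (hr _ _ hq))).elim

def bandGraph (N k : ℕ) : SimpleGraph (Fin N) :=
  SimpleGraph.fromRel (fun i j : Fin N => (i : ℕ) < (j : ℕ) ∧ (j : ℕ) - (i : ℕ) ≤ k)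

theorem bandGraph_adj_sub_le {N k : ℕ} {i j : Fin N} (h : (bandGraph N k).Adj i j)
    (hij : i < j) : (j : ℕ) - i ≤ k := by
  rw [bandGraph, SimpleGraph.fromRel_adj] at h
  rw [Fin.lt_def] at hij
  omega

theorem nestedMatching_adj_zero_last {n : ℕ} (hn : 1 ≤ n) :
    (nestedMatching n).Adj ⟨0, by omega⟩ ⟨2 * n - 1, by omega⟩ := by
  rw [nestedMatching, SimpleGraph.fromRel_adj]
  refine ⟨fun h => ?_, Or.inl (zero_add _)⟩
  rw [Fin.mk.injEq] at h
  omega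

theorem not_orderedSubgraph_nestedMatching_bandGraph {n N k : ℕ} (hn : 1 ≤ n)
    (hk : k ≤ 2 * n - 2) : ¬ OrderedSubgraph (nestedMatching n) (bandGraph N k) := by
  intro h
  obtain ⟨a, b, hab, hadj, hlen⟩ := h.exists_adj_sub_le (by rw [Fin.lt_def]; simp only; omega)
    (nestedMatching_adj_zero_last hn)
  have := bandGraph_adj_sub_le hadj hab
  simp only at hlen
  omega

theorem Fin.card_filter_lt_sub_le (N k : ℕ) {j : ℕ} (hj : j < N) :
    #{i : Fin N | (i : ℕ) < j ∧ j - i ≤ k} = min j k := by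
  rw [card_filter, Fin.sum_univ_eq_sum_range (fun i => if i < j ∧ j - i ≤ k then 1 else 0),
    ← card_filter]
  have : {i ∈ range N | i < j ∧ j - i ≤ k} = Ico (j - k) j := by
    ext i
    simp only [mem_filter, mem_range, mem_Ico]
    omega
  rw [this, Nat.card_Ico]
  omega

theorem Fin.ncard_setOf_lt_sub_le (N k : ℕ) :
    {p : Fin N × Fin N | (p.1 : ℕ) < p.2 ∧ (p.2 : ℕ) - p.1 ≤ k}.ncard =
      ∑ j ∈ range N, min j k := by
  rw [Set.ncard_eq_toFinset_card', Set.toFinset_ofPred, card_filter, Fintype.sum_prod_type_right,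
    Fin.sum_univ_eq_sum_range (fun j => ∑ i : Fin N, if (i : ℕ) < j ∧ j - i ≤ k then 1 else 0)]
  refine sum_congr rfl fun j hj => ?_
  rw [← card_filter, Fin.card_filter_lt_sub_le N k (mem_range.mp hj)]

theorem two_mul_sum_range_min {k N : ℕ} (hkN : k < N) :
    2 * ∑ j ∈ range N, min j k = k * (2 * N - k - 1) := by
  induction N, hkN using Nat.le_induction with
  | base =>
    rw [sum_congr rfl fun j hj => min_eq_left (Nat.lt_succ_iff.mp (mem_range.mp hj)),
      mul_comm, sum_range_id_mul_two, Nat.succ_sub_one, mul_comm]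
    congr 1
    omega
  | succ N hkN ih =>
    rw [sum_range_succ, mul_add, ih, min_eq_right (by omega : k ≤ N)]
    obtain ⟨t, rfl⟩ : ∃ t, N = k + 1 + t := ⟨N - k - 1, by omega⟩
    rw [show 2 * (k + 1 + t) - k - 1 = k + 2 * t + 1 by omega,
      show 2 * (k + 1 + t + 1) - k - 1 = k + 2 * t + 3 by omega]
    ring

theorem two_mul_ncard_edgeSet_bandGraph {N k : ℕ} (hkN : k < N) :
    2 * (bandGraph N k).edgeSet.ncard = k * (2 * N - k - 1) := by
  rw [bandGraph, SimpleGraph.ncard_edgeSet_fromRel_of_lt fun _ _ h => h.1,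
    Fin.ncard_setOf_lt_sub_le, two_mul_sum_range_min hkN]

/-- For every positive `n` and `N ≥ 2n`, the ordered graph on `[N]` whose
edges are all pairs at distance between `1` and `2n - 2` has exactly
`(n - 1)(2N - 2n + 1)` edges and contains no ordered copy of `NM_n`; hence the upper
bound on the number of edges of `NM_n`-free ordered graphs on `[N]` is attained. -/
theorem stmt_15 (n N : ℕ) (hn : 1 ≤ n) (hN : 2 * n ≤ N) :
    (SimpleGraph.fromRel
        (fun i j : Fin N => (i : ℕ) < (j : ℕ) ∧ (j : ℕ) - (i : ℕ) ≤ 2 * n - 2)).edgeSet.ncard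
        = (n - 1) * (2 * N - 2 * n + 1) ∧
    ¬ OrderedSubgraph (nestedMatching n)
        (SimpleGraph.fromRel
          (fun i j : Fin N => (i : ℕ) < (j : ℕ) ∧ (j : ℕ) - (i : ℕ) ≤ 2 * n - 2)) := by
  refine ⟨?_, not_orderedSubgraph_nestedMatching_bandGraph hn le_rfl⟩
  have hcount := two_mul_ncard_edgeSet_bandGraph (N := N) (k := 2 * n - 2) (by omega)
  obtain ⟨m, rfl⟩ : ∃ m, n = m + 1 := ⟨n - 1, by omega⟩
  rw [show 2 * (m + 1) - 2 = 2 * m by omega,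
    show 2 * N - 2 * m - 1 = 2 * N - 2 * (m + 1) + 1 by omega, mul_assoc] at hcount
  exact Nat.eq_of_mul_eq_mul_left two_pos hcount
end

section
/- For every positive integer n, if an ordered graph G on [N] is covered by n − 1 pairwise disjoint routes, then G does not contain the nested matching NM_n as an ordered subgraph. -/
/-!
Every route moves weakly right and down, so any two positions on it are comparable in the
product order on `Fin N × Fin N`. The `n` edges `{φ i, φ (2n - 1 - i)}` of an ordered copy of
`NM_n` occupy positions that are pairwise incomparable: their left ends increase while their
right ends decrease. Hence no two of them share a route, and `n - 1` routes cannot cover them.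
-/

lemma IsRoute.isChain_le {N : ℕ} {s : List (Fin N × Fin N)} (hs : IsRoute s) :
    IsChain (· ≤ ·) {p | p ∈ s} := by
  have hsorted : s.Pairwise (· ≤ ·) := by
    refine (List.IsChain.imp ?_ hs).pairwise
    rintro p q (⟨h1, h2⟩ | ⟨h1, h2⟩) <;>
      simp only [Prod.le_def, Fin.le_def, Fin.ext_iff] at * <;> omega
  intro p hp q hq _
  exact List.Pairwise.forall_of_forall_of_flip (R := fun p q => p ≤ q ∨ q ≤ p)
    (fun _ _ => Or.inl le_rfl) (hsorted.imp Or.inl) (hsorted.imp Or.inr) hp hq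

lemma Fintype.card_le_of_antichain_of_chain_cover {α ι κ : Type*} [Preorder α]
    [Fintype ι] [Fintype κ] (c : κ → Set α) (hc : ∀ k, IsChain (· ≤ ·) (c k)) (p : ι → α)
    (hp : Pairwise fun i j => ¬ p i ≤ p j) (hcover : ∀ i, ∃ k, p i ∈ c k) :
    Fintype.card ι ≤ Fintype.card κ := by
  choose k hk using hcover
  refine Fintype.card_le_of_injective k fun i j hij => ?_
  by_contra hne
  rcases (hc (k i)).total (hk i) (hij ▸ hk j) with h | h
  · exact hp hne h
  · exact hp (Ne.symm hne) h

lemma nestedMatching_adj_rev {n : ℕ} (i : Fin (2 * n)) : (nestedMatching n).Adj i i.rev := by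
  have hi := i.isLt
  simp only [nestedMatching, SimpleGraph.fromRel_adj, ne_eq, Fin.ext_iff, Fin.val_rev]
  omega

lemma OrderedSubgraph.exists_antichain_of_nestedMatching {n N : ℕ} {G : SimpleGraph (Fin N)}
    (h : OrderedSubgraph (nestedMatching n) G) :
    ∃ p : Fin n → Fin N × Fin N, (Pairwise fun i j => ¬ p i ≤ p j) ∧
      ∀ i, G.Adj (p i).1 (p i).2 ∧ (p i).1 < (p i).2 := by
  obtain ⟨φ, hφ, hadj⟩ := h
  let v : Fin n → Fin (2 * n) := Fin.castLE (by omega)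
  refine ⟨fun i => (φ (v i), φ (v i).rev), fun i j hne hle => ?_, fun i =>
    ⟨hadj _ _ (nestedMatching_adj_rev _), hφ ?_⟩⟩
  · rcases hne.lt_or_gt with hij | hij
    · exact (hφ (Fin.rev_lt_rev.2 ((Fin.castLE_lt_castLE_iff _).2 hij))).not_ge hle.2
    · exact (hφ ((Fin.castLE_lt_castLE_iff _).2 hij)).not_ge hle.1
  · simp only [v, Fin.lt_def, Fin.val_rev, Fin.val_castLE]
    omega

theorem stmt_16_general (n N : ℕ) (hn : 1 ≤ n) (G : SimpleGraph (Fin N))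
    (routes : Fin (n - 1) → List (Fin N × Fin N))
    (hroutes : ∀ k, IsRoute (routes k))
    (hcover : ∀ i j : Fin N, G.Adj i j → i < j → ∃ k, (i, j) ∈ routes k) :
    ¬ OrderedSubgraph (nestedMatching n) G := by
  intro h
  obtain ⟨p, hanti, hedge⟩ := h.exists_antichain_of_nestedMatching
  have hcard := Fintype.card_le_of_antichain_of_chain_cover (fun k => {q | q ∈ routes k})
    (fun k => (hroutes k).isChain_le) p hanti fun i => hcover _ _ (hedge i).1 (hedge i).2
  simp only [Fintype.card_fin] at hcard
  omega

/-- For every positive `n`, if an ordered graph `G` on `[N]` is covered by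
`n - 1` pairwise disjoint routes, then `G` contains no ordered copy of `NM_n`. -/
theorem stmt_16 (n N : ℕ) (hn : 1 ≤ n) (G : SimpleGraph (Fin N))
    (routes : Fin (n - 1) → List (Fin N × Fin N))
    (hroutes : ∀ k, IsRoute (routes k))
    (hdisj : ∀ k l, k ≠ l → ∀ p, p ∈ routes k → p ∉ routes l)
    (hcover : ∀ i j : Fin N, G.Adj i j → i < j → ∃ k, (i, j) ∈ routes k) :
    ¬ OrderedSubgraph (nestedMatching n) G :=
  stmt_16_general n N hn G routes hroutes hcover
end

section
/- Let G be a connected ordered graph, let n be a positive integer, set N = r_<(G, K_n), and let M ≥ N. Then every red-blue coloring of the edges of the complete ordered graph K_M either contains a blue copy of K_n as an ordered subgraph, or there exist M − N + 1 distinct vertices of K_M each of which is the rightmost vertex of some red ordered-subgraph copy of G (i.e., the maximum of the image of the embedding of that copy). -/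
/-!
Call a vertex a right end if it is the rightmost vertex of a red ordered copy of `G`. Unless
there is a blue `K_n`, fewer than `r_<(G, K_n)` vertices fail to be right ends: otherwise
`r_<(G, K_n)` of them, in their inherited order, carry a red copy of `G` (whose rightmost vertex
would be a right end) or a blue `K_n`. That `r_<(G, K_n)` is finite comes from the classical
bound `r(K_m, K_n) ≤ (m + n choose m)`.
-/

open Finset SimpleGraph

theorem SimpleGraph.exists_isNClique_or_isNClique_compl {V : Type*} [DecidableEq V]
    (R : SimpleGraph V) [DecidableRel R.Adj] (m n : ℕ) (s : Finset V)
    (hs : (m + n).choose m ≤ #s) :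
    (∃ t ⊆ s, R.IsNClique m t) ∨ ∃ t ⊆ s, Rᶜ.IsNClique n t := by
  induction m generalizing n s with
  | zero => exact .inl ⟨∅, empty_subset _, by simp⟩
  | succ m ihm =>
    induction n generalizing s with
    | zero => exact .inr ⟨∅, empty_subset _, by simp⟩
    | succ n ihn =>
      obtain ⟨v, hv⟩ : s.Nonempty := card_pos.1 ((Nat.choose_pos (by omega)).trans_le hs)
      set A := (s.erase v).filter (R.Adj v)
      set B := (s.erase v).filter (¬R.Adj v ·)
      have hAs : A ⊆ s := (filter_subset _ _).trans (erase_subset _ _)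
      have hBs : B ⊆ s := (filter_subset _ _).trans (erase_subset _ _)
      have hAB : #A + #B + 1 = #s := by
        rw [card_filter_add_card_filter_not, card_erase_add_one hv]
      -- Pascal's rule is the recursion `r(m+1, n+1) ≤ r(m, n+1) + r(m+1, n)`.
      have hsplit : (m + 1 + n).choose m ≤ #A ∨ (m + 1 + n).choose (m + 1) ≤ #B := by
        rw [show m + 1 + (n + 1) = m + 1 + n + 1 by omega, Nat.choose_succ_succ'] at hs
        omega
      rcases hsplit with hA | hB
      · rcases ihm (n + 1) A (by rwa [← add_right_comm] at hA) with ⟨t, htA, ht⟩ | ⟨t, htA, ht⟩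
        · refine .inl ⟨insert v t, insert_subset hv (htA.trans hAs), ht.insert fun b hb => ?_⟩
          exact (mem_filter.1 (htA hb)).2
        · exact .inr ⟨t, htA.trans hAs, ht⟩
      · rcases ihn B hB with ⟨t, htB, ht⟩ | ⟨t, htB, ht⟩
        · exact .inl ⟨t, htB.trans hBs, ht⟩
        · refine .inr ⟨insert v t, insert_subset hv (htB.trans hBs), ht.insert fun b hb => ?_⟩
          obtain ⟨hbv, hnadj⟩ := mem_filter.1 (htB hb)
          exact (compl_adj _ _ _).2 ⟨(ne_of_mem_erase hbv).symm, hnadj⟩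

section Ordered

variable {m k N : ℕ}

theorem OrderedSubgraph.trans {K : ℕ} {G : SimpleGraph (Fin m)} {H : SimpleGraph (Fin k)}
    {R : SimpleGraph (Fin K)} (hGH : OrderedSubgraph G H) (hHR : OrderedSubgraph H R) :
    OrderedSubgraph G R := by
  obtain ⟨φ, hφ, hφadj⟩ := hGH
  obtain ⟨ψ, hψ, hψadj⟩ := hHR
  exact ⟨ψ ∘ φ, hψ.comp hφ, fun i j h => hψadj _ _ (hφadj i j h)⟩

theorem OrderedSubgraph.mono_left {G G' : SimpleGraph (Fin m)} {H : SimpleGraph (Fin k)}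
    (hG : G ≤ G') (h : OrderedSubgraph G' H) : OrderedSubgraph G H := by
  obtain ⟨φ, hφ, hφadj⟩ := h
  exact ⟨φ, hφ, fun i j hij => hφadj i j (hG hij)⟩

theorem orderedSubgraph_top_of_isNClique {R : SimpleGraph (Fin N)} {t : Finset (Fin N)}
    (ht : R.IsNClique m t) : OrderedSubgraph (⊤ : SimpleGraph (Fin m)) R :=
  ⟨t.orderEmbOfFin ht.card_eq, (t.orderEmbOfFin ht.card_eq).strictMono, fun i j hij =>
    ht.isClique (orderEmbOfFin_mem t _ i) (orderEmbOfFin_mem t _ j)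
      ((t.orderEmbOfFin ht.card_eq).injective.ne hij)⟩

theorem orderedSubgraph_compl_comap (f : Fin k ↪o Fin N) (R : SimpleGraph (Fin N)) :
    OrderedSubgraph (R.comap f)ᶜ Rᶜ :=
  ⟨f, f.strictMono, fun _ _ h => by
    rw [compl_adj] at h ⊢
    exact ⟨f.injective.ne h.1, h.2⟩⟩

theorem orderedRamsey_spec (G : SimpleGraph (Fin m)) (H : SimpleGraph (Fin k))
    (R : SimpleGraph (Fin (orderedRamsey G H))) :
    OrderedSubgraph G R ∨ OrderedSubgraph H Rᶜ := by
  refine Nat.sInf_mem (s := {N | ∀ R : SimpleGraph (Fin N), _}) ⟨(m + k).choose m, fun R => ?_⟩ R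
  classical
  rcases R.exists_isNClique_or_isNClique_compl m k univ (by simp) with ⟨t, -, ht⟩ | ⟨t, -, ht⟩
  · exact .inl ((orderedSubgraph_top_of_isNClique ht).mono_left le_top)
  · exact .inr ((orderedSubgraph_top_of_isNClique ht).mono_left le_top)

end Ordered

section RightEnds

variable {m M : ℕ} (G : SimpleGraph (Fin m)) (R : SimpleGraph (Fin M))

open scoped Classical in
noncomputable def rightEnds : Finset (Fin M) :=
  {v | ∃ φ : Fin m → Fin M, StrictMono φ ∧ (∀ i j, G.Adj i j → R.Adj (φ i) (φ j)) ∧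
    (∀ i, φ i ≤ v) ∧ ∃ i, φ i = v}

variable {G R}

theorem mem_rightEnds {v : Fin M} : v ∈ rightEnds G R ↔
    ∃ φ : Fin m → Fin M, StrictMono φ ∧ (∀ i j, G.Adj i j → R.Adj (φ i) (φ j)) ∧
      (∀ i, φ i ≤ v) ∧ ∃ i, φ i = v := by
  simp [rightEnds]

theorem exists_mem_rightEnds [Nonempty (Fin m)] {φ : Fin m → Fin M} (hφ : StrictMono φ)
    (hadj : ∀ i j, G.Adj i j → R.Adj (φ i) (φ j)) : ∃ i, φ i ∈ rightEnds G R := by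
  obtain ⟨i, -, hi⟩ := univ.exists_max_image φ univ_nonempty
  exact ⟨i, mem_rightEnds.2 ⟨φ, hφ, hadj, fun j => hi j (mem_univ j), i, rfl⟩⟩

theorem card_compl_rightEnds_lt [Nonempty (Fin m)] {k : ℕ} {H : SimpleGraph (Fin k)}
    (hH : ¬OrderedSubgraph H Rᶜ) : #(rightEnds G R)ᶜ < orderedRamsey G H := by
  by_contra! hle
  obtain ⟨C, hC, hCcard⟩ := exists_subset_card_eq hle
  set f := C.orderEmbOfFin hCcard
  rcases orderedRamsey_spec G H (R.comap f) with ⟨ψ, hψ, hadj⟩ | hblue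
  · obtain ⟨i, hi⟩ := exists_mem_rightEnds (f.strictMono.comp hψ) hadj
    exact mem_compl.1 (hC (orderEmbOfFin_mem C hCcard (ψ i))) hi
  · exact hH (hblue.trans (orderedSubgraph_compl_comap f R))

end RightEnds

theorem stmt_17_general (m n : ℕ) (G : SimpleGraph (Fin m)) (hG : G.Connected)
    (M : ℕ) (hM : orderedRamsey G (⊤ : SimpleGraph (Fin n)) ≤ M)
    (R : SimpleGraph (Fin M)) :
    OrderedSubgraph (⊤ : SimpleGraph (Fin n)) Rᶜ ∨
    ∃ S : Finset (Fin M),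
      S.card = M - orderedRamsey G (⊤ : SimpleGraph (Fin n)) + 1 ∧
      ∀ v ∈ S, ∃ φ : Fin m → Fin M, StrictMono φ ∧
        (∀ i j : Fin m, G.Adj i j → R.Adj (φ i) (φ j)) ∧
        (∀ i, φ i ≤ v) ∧ (∃ i, φ i = v) := by
  by_cases hblue : OrderedSubgraph (⊤ : SimpleGraph (Fin n)) Rᶜ
  · exact .inl hblue
  have := hG.nonempty
  have hcard := card_compl_rightEnds_lt (G := G) hblue
  rw [card_compl, Fintype.card_fin] at hcard
  obtain ⟨S, hS, hScard⟩ := exists_subset_card_eq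
    (show M - orderedRamsey G (⊤ : SimpleGraph (Fin n)) + 1 ≤ #(rightEnds G R) by omega)
  exact .inr ⟨S, hScard, fun v hv => mem_rightEnds.1 (hS hv)⟩

/-- Let `G` be a connected ordered graph, `N = r_<(G, K_n)` and `M ≥ N`.
Every red-blue coloring of the edges of `K_M` (given by its red graph `R`) contains a
blue copy of `K_n`, or there are `M - N + 1` vertices each of which is the rightmost
vertex of a red ordered copy of `G`. -/
theorem stmt_17 (m n : ℕ) (hn : 1 ≤ n) (G : SimpleGraph (Fin m)) (hG : G.Connected)
    (M : ℕ) (hM : orderedRamsey G (⊤ : SimpleGraph (Fin n)) ≤ M)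
    (R : SimpleGraph (Fin M)) :
    OrderedSubgraph (⊤ : SimpleGraph (Fin n)) Rᶜ ∨
    ∃ S : Finset (Fin M),
      S.card = M - orderedRamsey G (⊤ : SimpleGraph (Fin n)) + 1 ∧
      ∀ v ∈ S, ∃ φ : Fin m → Fin M, StrictMono φ ∧
        (∀ i j : Fin m, G.Adj i j → R.Adj (φ i) (φ j)) ∧
        (∀ i, φ i ≤ v) ∧ (∃ i, φ i = v) :=
  stmt_17_general m n G hG M hM R
end

section
/- For all positive integers k and N, if r_<(NM_{k+1}, K_3) > N, then there exists an ordered graph on [N] that does not contain the nested matching NM_{k+1} as an ordered subgraph and whose chromatic number is at least ⌈N/2⌉. -/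
/-!
The red graph `R` of a colouring of `K_N` witnessing `N < r_<(NM_{k+1}, K_3)` has no ordered
`NM_{k+1}`, and its complement has no triangle, i.e. `R` has no independent set of size three.
So every colour class of a proper colouring of `R` has at most two vertices, whence
`χ(R) ≥ ⌈N / 2⌉`.
-/

lemma exists_not_orderedSubgraph_of_lt_orderedRamsey {m k N : ℕ} {G : SimpleGraph (Fin m)}
    {H : SimpleGraph (Fin k)} (hN : N < orderedRamsey G H) :
    ∃ R : SimpleGraph (Fin N), ¬ OrderedSubgraph G R ∧ ¬ OrderedSubgraph H Rᶜ := by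
  simpa only [Set.mem_ofPred_eq, not_forall, not_or] using Nat.notMem_of_lt_sInf hN

namespace SimpleGraph

lemma IsNClique.orderedSubgraph_top {n N : ℕ} {H : SimpleGraph (Fin N)} {s : Finset (Fin N)}
    (hs : H.IsNClique n s) : OrderedSubgraph (⊤ : SimpleGraph (Fin n)) H :=
  ⟨s.orderEmbOfFin hs.card_eq, (s.orderEmbOfFin hs.card_eq).strictMono, fun i j hij =>
    hs.isClique (s.orderEmbOfFin_mem hs.card_eq i) (s.orderEmbOfFin_mem hs.card_eq j)
      ((s.orderEmbOfFin hs.card_eq).injective.ne hij)⟩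

lemma indepSetFree_of_not_orderedSubgraph_top_compl {n N : ℕ} {R : SimpleGraph (Fin N)}
    (hR : ¬ OrderedSubgraph (⊤ : SimpleGraph (Fin n)) Rᶜ) : R.IndepSetFree n :=
  fun _ ht => hR ((R.isNClique_compl).mpr ht).orderedSubgraph_top

variable {V : Type*} {G : SimpleGraph V} {a : ℕ}

lemma IndepSetFree.card_le_of_isIndepSet (hG : G.IndepSetFree (a + 1)) {t : Finset V}
    (ht : G.IsIndepSet t) : t.card ≤ a := by
  by_contra! hlt
  obtain ⟨u, hut, hu⟩ := Finset.exists_subset_card_eq (Nat.succ_le_of_lt hlt)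
  exact hG u ⟨ht.mono (Finset.coe_subset.mpr hut), hu⟩

lemma Coloring.card_le_mul_of_indepSetFree [Fintype V] [DecidableEq V] {n : ℕ}
    (C : G.Coloring (Fin n)) (hG : G.IndepSetFree (a + 1)) : Fintype.card V ≤ a * n :=
  calc Fintype.card V = ∑ c : Fin n, (Finset.univ.filter (C · = c)).card :=
        Finset.card_eq_sum_card_fiberwise fun v _ => Finset.mem_univ (C v)
    _ ≤ ∑ _c : Fin n, a := Finset.sum_le_sum fun c _ => hG.card_le_of_isIndepSet <| by
        simpa [Coloring.colorClass] using C.isIndepSet_colorClass c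
    _ = a * n := by simp [mul_comm]

/-- `(card V + a - 1) / a` is `⌈card V / a⌉`. -/
lemma le_chromaticNumber_of_indepSetFree [Fintype V] (hG : G.IndepSetFree (a + 1)) :
    (((Fintype.card V + a - 1) / a : ℕ) : ℕ∞) ≤ G.chromaticNumber := by
  classical
  refine le_chromaticNumber_iff_coloring.mpr fun m C => ?_
  have hcard := C.card_le_mul_of_indepSetFree hG
  rcases Nat.eq_zero_or_pos a with rfl | ha
  · simp
  · rw [Nat.div_le_iff_le_mul_add_pred ha]
    omega

end SimpleGraph

theorem stmt_18_general (k N : ℕ)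
    (h : N < orderedRamsey (nestedMatching (k + 1)) (⊤ : SimpleGraph (Fin 3))) :
    ∃ G : SimpleGraph (Fin N),
      ¬ OrderedSubgraph (nestedMatching (k + 1)) G ∧
      (((N + 1) / 2 : ℕ) : ℕ∞) ≤ G.chromaticNumber := by
  obtain ⟨R, hNM, hK3⟩ := exists_not_orderedSubgraph_of_lt_orderedRamsey h
  refine ⟨R, hNM, ?_⟩
  simpa using SimpleGraph.le_chromaticNumber_of_indepSetFree
    (SimpleGraph.indepSetFree_of_not_orderedSubgraph_top_compl hK3)

/-- For all positive `k` and `N`, if `r_<(NM_{k+1}, K_3) > N`, then there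
is an ordered graph on `[N]` with no ordered copy of `NM_{k+1}` and chromatic number at
least `⌈N / 2⌉`. -/
theorem stmt_18 (k N : ℕ) (hk : 1 ≤ k) (hN : 1 ≤ N)
    (h : N < orderedRamsey (nestedMatching (k + 1)) (⊤ : SimpleGraph (Fin 3))) :
    ∃ G : SimpleGraph (Fin N),
      ¬ OrderedSubgraph (nestedMatching (k + 1)) G ∧
      (((N + 1) / 2 : ℕ) : ℕ∞) ≤ G.chromaticNumber :=
  stmt_18_general k N h
end

section
/- For every positive integer n, if a connected ordered graph G is (n+1)-good, then G is n-good. -/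
open SimpleGraph Function

/-- The arrow relation `N → (G, H)`; `orderedRamsey G H` is the least `N` with `N → (G, H)`. -/
def OrderedArrows (N : ℕ) {m k : ℕ} (G : SimpleGraph (Fin m)) (H : SimpleGraph (Fin k)) :
    Prop :=
  ∀ R : SimpleGraph (Fin N), OrderedSubgraph G R ∨ OrderedSubgraph H Rᶜ

section Arrows

variable {m k : ℕ} {G : SimpleGraph (Fin m)} {H : SimpleGraph (Fin k)}

theorem OrderedArrows.mono {N M : ℕ} (h : OrderedArrows N G H) (hNM : N ≤ M) :
    OrderedArrows M G H := by
  intro R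
  have hf := Fin.strictMono_castLE hNM
  refine (h (R.comap (Fin.castLE hNM))).imp
    (fun ⟨φ, hφ, hadj⟩ => ⟨_, hf.comp hφ, hadj⟩)
    (fun ⟨φ, hφ, hadj⟩ => ⟨_, hf.comp hφ, fun i j hij => ?_⟩)
  obtain ⟨hne, hnadj⟩ := hadj i j hij
  exact ⟨hf.injective.ne hne, hnadj⟩

theorem orderedRamsey_eq_succ {N : ℕ} (h : OrderedArrows (N + 1) G H)
    (h' : ¬ OrderedArrows N G H) : orderedRamsey G H = N + 1 :=
  le_antisymm (Nat.sInf_le h) <| le_csInf ⟨_, h⟩ fun _ hM =>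
    Nat.succ_le_of_lt <| lt_of_not_ge fun hle => h' (OrderedArrows.mono hM hle)

theorem orderedArrows_orderedRamsey (h : orderedRamsey G H ≠ 0) :
    OrderedArrows (orderedRamsey G H) G H :=
  Nat.sInf_mem <| Nat.nonempty_of_pos_sInf (Nat.pos_of_ne_zero h)

end Arrows

theorem SimpleGraph.Preconnected.apply_eq_of_adj {V α : Type*} {G : SimpleGraph V}
    (hG : G.Preconnected) {f : V → α} (hf : ∀ u v, G.Adj u v → f u = f v) (u v : V) :
    f u = f v := by
  obtain ⟨w⟩ := hG u v
  induction w with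
  | nil => rfl
  | cons h _ ih => exact (hf _ _ h).trans ih

theorem not_orderedArrows_of_injective_prod {α β : Type*} [Fintype α] [Fintype β]
    {N m n : ℕ} {G : SimpleGraph (Fin m)} (hG : G.Preconnected) (e : Fin N → α × β)
    (he : Injective e) (hα : Fintype.card α < m) (hβ : Fintype.card β < n) :
    ¬ OrderedArrows N G (⊤ : SimpleGraph (Fin n)) := by
  intro h
  set B : SimpleGraph (Fin N) := (⊤ : SimpleGraph β).comap fun x => (e x).2
  rcases h Bᶜ with ⟨φ, hφ, hadj⟩ | ⟨ψ, -, hadj⟩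
  · have hblock := hG.apply_eq_of_adj (f := fun i => (e (φ i)).2)
      fun i j hij => not_not.mp (hadj i j hij).2
    have hinj : Injective fun i => (e (φ i)).1 := fun i j hij =>
      hφ.injective <| he <| Prod.ext hij (hblock i j)
    exact hα.not_ge (by simpa using Fintype.card_le_of_injective _ hinj)
  · have hinj : Injective fun i => (e (ψ i)).2 := fun i j hij => by
      by_contra hne
      exact (compl_compl B ▸ hadj i j hne : B.Adj _ _) hij
    exact hβ.not_ge (by simpa using Fintype.card_le_of_injective _ hinj)

def SimpleGraph.appendClique {N : ℕ} (R : SimpleGraph (Fin N)) (d : ℕ) :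
    SimpleGraph (Fin (N + d)) :=
  (R ⊕g ⊤).comap finSumFinEquiv.symm

namespace SimpleGraph

variable {N d : ℕ} {R : SimpleGraph (Fin N)}

@[simp]
theorem appendClique_adj_castAdd {a b : Fin N} :
    (R.appendClique d).Adj (Fin.castAdd d a) (Fin.castAdd d b) ↔ R.Adj a b := by
  simp [appendClique]

theorem appendClique_adj_of_le {x y : Fin (N + d)} (hx : N ≤ x) (hy : N ≤ y) (hxy : x ≠ y) :
    (R.appendClique d).Adj x y := by
  induction x using Fin.addCases <;> induction y using Fin.addCases <;>
    simp_all [appendClique] <;> omega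

theorem lt_iff_of_appendClique_adj {x y : Fin (N + d)} (h : (R.appendClique d).Adj x y) :
    (x : ℕ) < N ↔ (y : ℕ) < N := by
  induction x using Fin.addCases <;> induction y using Fin.addCases <;> simp_all [appendClique]

end SimpleGraph

section AppendClique

variable {N d : ℕ} {R : SimpleGraph (Fin N)}

theorem OrderedSubgraph.of_appendClique {G : SimpleGraph (Fin (d + 1))} (hG : G.Preconnected)
    (h : OrderedSubgraph G (R.appendClique d)) : OrderedSubgraph G R := by
  obtain ⟨φ, hφ, hadj⟩ := h
  have hside := hG.apply_eq_of_adj (f := fun i => ((φ i : ℕ) < N))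
    fun i j hij => propext (lt_iff_of_appendClique_adj (hadj i j hij))
  by_cases h0 : (φ 0 : ℕ) < N
  · have hcast i : ∃ a, Fin.castAdd d a = φ i :=
      ⟨_, Fin.castAdd_castLT d _ (hside 0 i ▸ h0)⟩
    choose a ha using hcast
    refine ⟨a, fun i j hij => ?_, fun i j hij => ?_⟩
    · exact (Fin.strictMono_castAdd d).lt_iff_lt.mp (by simpa only [ha] using hφ hij)
    · simpa only [← ha, appendClique_adj_castAdd] using hadj i j hij
  · have hge i : N ≤ (φ i : ℕ) := not_lt.mp (hside 0 i ▸ h0)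
    have hinj : Injective fun i => (⟨φ i - N, by omega⟩ : Fin d) := fun i j hij =>
      hφ.injective <| Fin.ext <| by have := hge i; have := hge j; have := Fin.mk.inj hij; omega
    simpa using Fintype.card_le_of_injective _ hinj

theorem OrderedSubgraph.compl_of_appendClique {n : ℕ}
    (h : OrderedSubgraph (⊤ : SimpleGraph (Fin (n + 1))) (R.appendClique d)ᶜ) :
    OrderedSubgraph (⊤ : SimpleGraph (Fin n)) Rᶜ := by
  obtain ⟨ψ, hψ, hadj⟩ := h
  have hlt (i : Fin n) : (ψ i.castSucc : ℕ) < N := by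
    by_contra! hge
    have hlast := hψ (Fin.castSucc_lt_last i)
    refine (hadj _ _ ((top_adj _ _).mpr (Fin.castSucc_lt_last i).ne)).2 ?_
    exact appendClique_adj_of_le hge (hge.trans (Fin.lt_def.mp hlast).le) hlast.ne
  have hcast (i : Fin n) : ∃ a, Fin.castAdd d a = ψ i.castSucc :=
    ⟨_, Fin.castAdd_castLT d _ (hlt i)⟩
  choose a ha using hcast
  refine ⟨a, fun i j hij => ?_, fun i j hij => ?_⟩
  · exact (Fin.strictMono_castAdd d).lt_iff_lt.mp
      (by simpa only [ha] using hψ (Fin.castSucc_lt_castSucc_iff.mpr hij))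
  · have hblue := hadj _ _ ((top_adj _ _).mpr ((Fin.castSucc_injective _).ne hij.ne))
    simpa only [← ha, compl_adj, appendClique_adj_castAdd, (Fin.castAdd_injective _ _).ne_iff]
      using hblue

end AppendClique

theorem OrderedArrows.top_of_add_top_succ {N d n : ℕ} {G : SimpleGraph (Fin (d + 1))}
    (hG : G.Preconnected) (h : OrderedArrows (N + d) G (⊤ : SimpleGraph (Fin (n + 1)))) :
    OrderedArrows N G (⊤ : SimpleGraph (Fin n)) := fun R =>
  (h (R.appendClique d)).imp (.of_appendClique hG) .compl_of_appendClique

theorem not_orderedArrows_mul_top {d k : ℕ} {G : SimpleGraph (Fin (d + 1))}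
    (hG : G.Preconnected) :
    ¬ OrderedArrows (d * k) G (⊤ : SimpleGraph (Fin (k + 1))) :=
  not_orderedArrows_of_injective_prod hG finProdFinEquiv.symm finProdFinEquiv.symm.injective
    (by simp) (by simp)

/-- For every positive integer `n`, if a connected ordered graph `G` is
`(n+1)`-good, then `G` is `n`-good. -/
theorem stmt_19 (n : ℕ) (hn : 1 ≤ n) (m : ℕ) (G : SimpleGraph (Fin m))
    (hG : G.Connected) (hgood : IsNGood (n + 1) G) :
    IsNGood n G := by
  obtain ⟨d, rfl⟩ : ∃ d, m = d + 1 :=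
    ⟨m - 1, by have := Fin.pos_iff_nonempty.mpr hG.nonempty; omega⟩
  obtain ⟨k, rfl⟩ : ∃ k, n = k + 1 := ⟨n - 1, by omega⟩
  have hramsey : orderedRamsey G (⊤ : SimpleGraph (Fin (k + 1 + 1))) = d * k + 1 + d := by
    rw [hgood.2, Nat.add_sub_cancel, Nat.add_sub_cancel]
    ring
  have hup := orderedArrows_orderedRamsey (G := G) (H := ⊤) (by omega)
  rw [hramsey] at hup
  refine ⟨hG, ?_⟩
  simpa only [Nat.add_sub_cancel] using
    orderedRamsey_eq_succ (hup.top_of_add_top_succ hG.preconnected)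
      (not_orderedArrows_mul_top hG.preconnected)
end
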